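/- Let n ∈ ℕ and define the n × n matrix Λ_n by (Λ_n)_{i,j} = C(2n - i - j, n - i) for 1 ≤ i, j ≤ n. Then Λ_n is invertible, and its inverse satisfies (Λ_n^{-1})_{i,j} = Σ_{k=1}^{min{i,j}} (-1)^{i+j} C(n - k, n - i) C(n - k, n - j). -/

import Mathlib

/-!
Write `L a b = C(a, b)` for the Pascal matrix (indices from 0) and reverse indices by
`i ↦ n - 1 - i`. By Vandermonde's identity `Λ_n` is `L Lᵀ` with rows and columns reversed (the
factorisation `Λ_n = U_n U_nᵀ`, where `U_n` is `L` with its rows reversed). Binomial inversion says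
that the signed Pascal matrix `(-1)^(a+b) C(a, b)` inverts `L`, so `Λ_n⁻¹` is `(L⁻¹)ᵀ L⁻¹` reversed;
substituting `c = n - k` in its entries gives the stated sums.
-/

open Finset

theorem Nat.sum_range_choose_mul_choose {a N : ℕ} (b : ℕ) (h : a < N) :
    ∑ k ∈ range N, a.choose k * b.choose k = (a + b).choose a := by
  rw [add_comm, Nat.add_choose_eq, Finset.Nat.sum_antidiagonal_eq_sum_range_succ_mk]
  refine (sum_subset_zero_on_sdiff (range_subset_range.2 h) (fun k hk => ?_) (fun k hk => ?_)).symm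
  · simp [Nat.choose_eq_zero_of_lt (show a < k by simp at hk; omega)]
  · rw [mul_comm, Nat.choose_symm (by simp at hk; omega)]

theorem Int.sum_range_neg_one_pow_mul_choose_mul_choose {a N : ℕ} (c : ℕ) (h : a < N) :
    ∑ b ∈ Finset.range N, (-1 : ℤ) ^ (b + c) * a.choose b * b.choose c =
      if a = c then 1 else 0 := by
  rcases lt_or_ge a c with hac | hca
  · rw [if_neg hac.ne]
    refine sum_eq_zero fun b _ => ?_
    rcases lt_or_ge a b with hab | hba
    · simp [Nat.choose_eq_zero_of_lt hab]
    · simp [Nat.choose_eq_zero_of_lt (hba.trans_lt hac)]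
  obtain ⟨d, rfl⟩ := Nat.exists_eq_add_of_le hca
  have hvanish : ∀ b ∈ Finset.range N \ Finset.range (c + (d + 1)),
      (-1 : ℤ) ^ (b + c) * (c + d).choose b * b.choose c = 0 := fun b hb => by
    simp [Nat.choose_eq_zero_of_lt (show c + d < b by simp at hb; omega)]
  have hshift : ∀ m ∈ Finset.range (d + 1),
      (-1 : ℤ) ^ (c + m + c) * (c + d).choose (c + m) * (c + m).choose c =
        (c + d).choose c * ((-1) ^ m * d.choose m) := fun m _ => by
    have hmul := Nat.choose_mul (n := c + d) (Nat.le_add_right c m)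
    simp only [Nat.add_sub_cancel_left] at hmul
    rw [mul_assoc, ← Nat.cast_mul, hmul, add_right_comm, pow_add, ← two_mul, pow_mul]
    push_cast
    ring
  rw [← sum_subset_zero_on_sdiff (range_subset_range.2 (by omega)) hvanish (fun _ _ => rfl),
    sum_range_add, sum_eq_zero (fun b hb => by simp [Nat.choose_eq_zero_of_lt (mem_range.1 hb)]),
    sum_congr rfl hshift, ← mul_sum, Int.alternating_sum_range_choose]
  split_ifs <;> simp_all

theorem Nat.sum_range_choose_mul_choose_eq_sum_Icc {n p q : ℕ} (hp : p ≤ n) (hq : q ≤ n) :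
    ∑ c ∈ range n, c.choose (n - p) * c.choose (n - q) =
      ∑ k ∈ Icc 1 (min p q), (n - k).choose (n - p) * (n - k).choose (n - q) := by
  rw [← Ico_add_one_right_eq_Icc,
    sum_Ico_reflect (fun c => c.choose (n - p) * c.choose (n - q)) 1 (by omega),
    show n + 1 - (min p q + 1) = n - min p q by omega, Nat.add_sub_cancel]
  refine (sum_subset_zero_on_sdiff (fun c hc => ?_) (fun c hc => ?_) (fun _ _ => rfl)).symm
  · simp only [mem_Ico, mem_range] at hc ⊢
    omega
  · simp only [mem_sdiff, mem_Ico, mem_range] at hc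
    rcases le_total p q with hpq | hqp
    · simp [Nat.choose_eq_zero_of_lt (show c < n - p by omega)]
    · simp [Nat.choose_eq_zero_of_lt (show c < n - q by omega)]

namespace Matrix

variable (R : Type*) (n : ℕ)

def pascal [NatCast R] : Matrix (Fin n) (Fin n) R :=
  of fun a b => ((a : ℕ).choose b : R)

def pascalInv [Ring R] : Matrix (Fin n) (Fin n) R :=
  of fun a b => (-1) ^ ((a : ℕ) + b) * ((a : ℕ).choose b : R)

variable {R n}

theorem pascal_mul_transpose_apply [Semiring R] (a b : Fin n) :
    (pascal R n * (pascal R n)ᵀ) a b = (((a : ℕ) + b).choose a : R) := by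
  simp only [mul_apply, transpose_apply, pascal, of_apply]
  rw [Fin.sum_univ_eq_sum_range (fun k => ((a : ℕ).choose k : R) * ((b : ℕ).choose k : R)),
    ← Nat.sum_range_choose_mul_choose b a.isLt]
  push_cast
  rfl

theorem pascal_mul_pascalInv [CommRing R] : pascal R n * pascalInv R n = 1 := by
  ext a c
  have h : ∑ b ∈ range n, (-1 : R) ^ (b + (c : ℕ)) * ((a : ℕ).choose b : R) * (b.choose c : R) =
      if (a : ℕ) = c then 1 else 0 := by
    have h := congrArg (Int.cast : ℤ → R)
      (Int.sum_range_neg_one_pow_mul_choose_mul_choose (c : ℕ) a.isLt)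
    rw [apply_ite Int.cast, Int.cast_one, Int.cast_zero] at h
    push_cast at h
    exact h
  simp only [mul_apply, pascal, pascalInv, of_apply, one_apply, Fin.ext_iff, ← h]
  rw [Fin.sum_univ_eq_sum_range (fun b => ((a : ℕ).choose b : R) *
      ((-1) ^ (b + (c : ℕ)) * (b.choose c : R)))]
  exact sum_congr rfl fun b _ => by ring

theorem pascalInv_mul_pascal [CommRing R] : pascalInv R n * pascal R n = 1 :=
  mul_eq_one_comm.mp pascal_mul_pascalInv

theorem transpose_pascalInv_mul_pascalInv_apply [CommRing R] (a b : Fin n) :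
    ((pascalInv R n)ᵀ * pascalInv R n) a b =
      (-1) ^ ((a : ℕ) + b) * ((∑ c ∈ range n, c.choose a * c.choose b : ℕ) : R) := by
  simp only [mul_apply, transpose_apply, pascalInv, of_apply, Nat.cast_sum, Nat.cast_mul, mul_sum]
  rw [Fin.sum_univ_eq_sum_range (fun c => (-1 : R) ^ (c + (a : ℕ)) * (c.choose a : R) *
      ((-1) ^ (c + (b : ℕ)) * (c.choose b : R)))]
  refine sum_congr rfl fun c _ => ?_
  have hsign : (-1 : R) ^ (c + (a : ℕ)) * (-1) ^ (c + (b : ℕ)) = (-1) ^ ((a : ℕ) + b) := by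
    rw [← pow_add, show c + (a : ℕ) + (c + b) = a + b + 2 * c by ring, pow_add, pow_mul,
      neg_one_sq, one_pow, mul_one]
  linear_combination ((c.choose a : R) * (c.choose b : R)) * hsign

end Matrix

open Matrix

/-- The matrix `Λ_n` with `(Λ_n)_{i,j} = C(2n-i-j, n-i)` (1-based) is invertible with
`(Λ_n⁻¹)_{i,j} = ∑_{k=1}^{min(i,j)} (-1)^{i+j} C(n-k, n-i) C(n-k, n-j)`. -/
theorem lambda_matrix_inverse (n : ℕ) (Λ : Matrix (Fin n) (Fin n) ℝ)
    (hΛ : ∀ i j : Fin n,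
      Λ i j = (Nat.choose (2 * n - ((i : ℕ) + 1) - ((j : ℕ) + 1)) (n - ((i : ℕ) + 1)) : ℝ)) :
    IsUnit Λ ∧ ∀ i j : Fin n,
      Λ⁻¹ i j = ∑ k ∈ Finset.Icc 1 (min ((i : ℕ) + 1) ((j : ℕ) + 1)),
        (-1 : ℝ) ^ (((i : ℕ) + 1) + ((j : ℕ) + 1))
          * (Nat.choose (n - k) (n - ((i : ℕ) + 1)) : ℝ)
          * (Nat.choose (n - k) (n - ((j : ℕ) + 1)) : ℝ) := by
  set L := pascal ℝ n
  set L' := pascalInv ℝ n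
  have hΛ_eq : Λ = (L * Lᵀ).submatrix Fin.revPerm Fin.revPerm := by
    ext i j
    rw [hΛ, submatrix_apply, pascal_mul_transpose_apply]
    simp only [Fin.revPerm_apply, Fin.val_rev]
    congr 2
    omega
  have hΛM : Λ * (L'ᵀ * L').submatrix Fin.revPerm Fin.revPerm = 1 := by
    have hLL' : L * L' = 1 := pascal_mul_pascalInv
    have hL'L : L' * L = 1 := pascalInv_mul_pascal
    rw [hΛ_eq, submatrix_mul_equiv, ← submatrix_one_equiv Fin.revPerm]
    congr 1
    calc L * Lᵀ * (L'ᵀ * L') = L * (L' * L)ᵀ * L' := by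
          simp only [transpose_mul, Matrix.mul_assoc]
      _ = 1 := by rw [hL'L, transpose_one, Matrix.mul_one, hLL']
  refine ⟨(isUnit_iff_isUnit_det _).2 (isUnit_det_of_right_inverse hΛM), fun i j => ?_⟩
  rw [inv_eq_right_inv hΛM, submatrix_apply, transpose_pascalInv_mul_pascalInv_apply]
  simp only [Fin.revPerm_apply, Fin.val_rev]
  have hsign : (-1 : ℝ) ^ (n - ((i : ℕ) + 1) + (n - ((j : ℕ) + 1))) =
      (-1) ^ (((i : ℕ) + 1) + ((j : ℕ) + 1)) := by
    rw [neg_one_pow_eq_pow_mod_two, neg_one_pow_eq_pow_mod_two (n := (i : ℕ) + 1 + _)]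
    congr 1
    omega
  rw [Nat.sum_range_choose_mul_choose_eq_sum_Icc i.isLt j.isLt, hsign, Nat.cast_sum, mul_sum]
  simp only [Nat.cast_mul, mul_assoc]
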